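/- arXiv:0812.3485 — 3 statements merged into one kernel-verified Lean document; each statement's English description precedes it below -/
import Mathlib

section
/- Fix r ∈ [0,1] and let (X,Y) be a random vector on [1,∞)² with joint distribution function F(x,y) = (1 − 1/x)(1 − 1/y)(1 + r/(x+y)) for x,y ≥ 1. Then the marginal distribution functions are F₁(x) = 1 − 1/x and F₂(y) = 1 − 1/y; the joint survival function satisfies Pr[X ≥ 1/u, Y ≥ 1/v] = uv·(1 + r(1−u)(1−v)/(u+v)) for all u,v ∈ (0,1]; and consequently for all x,y ∈ (0,∞): lim_{t↓0} t^{−1}·Pr[X ≥ 1/(tx), Y ≥ 1/(ty)] = r·xy/(x+y). -/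
/-!
Letting one coordinate tend to infinity in the joint distribution function gives the Pareto
marginals `1 - 1/x`. These are continuous, so `X` and `Y` have no atoms, and by
inclusion–exclusion `Pr[X ≥ a, Y ≥ b] = 1 - F₁(a) - F₂(b) + F(a, b)`, which at `a = 1/u`,
`b = 1/v` simplifies to `uv (1 + r(1-u)(1-v)/(u+v))`. At `u = tx`, `v = ty` this divided by `t`
is `txy + r xy (1-tx)(1-ty)/(x+y)`, a continuous function of `t` with value `r xy/(x+y)` at `0`.
-/

open MeasureTheory Set Real Filter Topology
open scoped ENNReal

section

variable {Ω : Type*} [MeasurableSpace Ω] (μ : Measure Ω)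

theorem tendsto_measure_inter_setOf_le_atTop (s : Set Ω) (Y : Ω → ℝ) :
    Tendsto (fun y => μ (s ∩ {ω | Y ω ≤ y})) atTop (𝓝 (μ s)) := by
  have hmono : Monotone fun y => s ∩ {ω | Y ω ≤ y} :=
    fun _ _ hyy' => inter_subset_inter_right s fun _ hω => le_trans hω hyy'
  have hunion : ⋃ y, s ∩ {ω | Y ω ≤ y} = s := by
    rw [← inter_iUnion]
    exact inter_eq_left.2 fun ω _ => mem_iUnion.2 ⟨Y ω, le_refl (Y ω)⟩
  have hlim := tendsto_measure_iUnion_atTop (μ := μ) hmono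
  rwa [hunion] at hlim

variable {μ} {X Y : Ω → ℝ} {r : ℝ}

theorem measure_setOf_eq_eq_zero_of_tendsto [IsFiniteMeasure μ] (hX : Measurable X) {a : ℝ}
    (h : Tendsto (fun s => μ {ω | X ω ≤ s}) (𝓝[<] a) (𝓝 (μ {ω | X ω ≤ a}))) :
    μ {ω | X ω = a} = 0 := by
  have hgap : Tendsto (fun s => μ {ω | X ω ≤ a} - μ {ω | X ω ≤ s}) (𝓝[<] a) (𝓝 0) := by
    simpa using ENNReal.Tendsto.sub (tendsto_const_nhds (x := μ {ω | X ω ≤ a})) h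
      (Or.inl (measure_ne_top μ _))
  refine le_antisymm (ge_of_tendsto hgap ?_) bot_le
  filter_upwards [self_mem_nhdsWithin] with s (hs : s < a)
  rw [← measure_sdiff (s₁ := {ω | X ω ≤ a}) (s₂ := {ω | X ω ≤ s})
    (fun ω (hω : X ω ≤ s) => hω.trans hs.le) (hX measurableSet_Iic).nullMeasurableSet
    (measure_ne_top μ _)]
  exact measure_mono fun ω (hω : X ω = a) => ⟨hω.le, fun (h' : X ω ≤ s) => (h'.trans_lt hs).ne hω⟩

theorem measureReal_setOf_le_and_le [IsProbabilityMeasure μ] (hX : Measurable X)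
    (hY : Measurable Y) {a b : ℝ} (ha : μ {ω | X ω = a} = 0) (hb : μ {ω | Y ω = b} = 0) :
    μ.real {ω | a ≤ X ω ∧ b ≤ Y ω} =
      1 - μ.real {ω | X ω ≤ a} - μ.real {ω | Y ω ≤ b} + μ.real {ω | X ω ≤ a ∧ Y ω ≤ b} := by
  have hae : ({ω | a ≤ X ω ∧ b ≤ Y ω} : Set Ω) =ᵐ[μ]
      (({ω | X ω ≤ a} ∪ {ω | Y ω ≤ b})ᶜ : Set Ω) := by
    filter_upwards [measure_eq_zero_iff_ae_notMem.1 ha, measure_eq_zero_iff_ae_notMem.1 hb]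
      with ω (hXa : X ω ≠ a) (hYb : Y ω ≠ b)
    change (a ≤ X ω ∧ b ≤ Y ω) = ¬(X ω ≤ a ∨ Y ω ≤ b)
    rw [not_or, not_le, not_le, hXa.symm.le_iff_lt, hYb.symm.le_iff_lt]
  have hincl := measureReal_union_add_inter (μ := μ) (s := {ω | X ω ≤ a})
    (t := {ω | Y ω ≤ b}) (hY measurableSet_Iic)
  have hcompl := probReal_compl_eq_one_sub (μ := μ) (s := {ω | X ω ≤ a} ∪ {ω | Y ω ≤ b})
    ((hX measurableSet_Iic).union (hY measurableSet_Iic))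
  rw [← ofPred_and] at hincl
  rw [measureReal_congr hae, hcompl]
  linarith

theorem measure_fst_le_eq_of_cdf
    (hcdf : ∀ x y : ℝ, 1 ≤ x → 1 ≤ y →
      μ {ω | X ω ≤ x ∧ Y ω ≤ y} =
        ENNReal.ofReal ((1 - 1 / x) * (1 - 1 / y) * (1 + r / (x + y)))) :
    ∀ x ≥ (1 : ℝ), μ {ω | X ω ≤ x} = ENNReal.ofReal (1 - 1 / x) := by
  intro x hx
  have hlim : Tendsto (fun y => ENNReal.ofReal ((1 - 1 / x) * (1 - 1 / y) * (1 + r / (x + y))))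
      atTop (𝓝 (ENNReal.ofReal (1 - 1 / x))) := by
    apply ENNReal.tendsto_ofReal
    have h1 : Tendsto (fun y : ℝ => 1 / y) atTop (𝓝 0) := by
      simpa only [one_div] using tendsto_inv_atTop_zero
    have h2 : Tendsto (fun y => r / (x + y)) atTop (𝓝 0) :=
      tendsto_const_nhds.div_atTop (tendsto_atTop_add_const_left _ x tendsto_id)
    have h3 : Tendsto (fun y => (1 - 1 / x) * (1 - 1 / y) * (1 + r / (x + y))) atTop
        (𝓝 ((1 - 1 / x) * (1 - 0) * (1 + 0))) :=
      (tendsto_const_nhds.mul (tendsto_const_nhds.sub h1)).mul (tendsto_const_nhds.add h2)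
    simpa only [sub_zero, add_zero, mul_one] using h3
  refine tendsto_nhds_unique ((tendsto_measure_inter_setOf_le_atTop μ _ Y).congr' ?_) hlim
  filter_upwards [eventually_ge_atTop 1] with y hy using hcdf x y hx hy

theorem measure_snd_le_eq_of_cdf
    (hcdf : ∀ x y : ℝ, 1 ≤ x → 1 ≤ y →
      μ {ω | X ω ≤ x ∧ Y ω ≤ y} =
        ENNReal.ofReal ((1 - 1 / x) * (1 - 1 / y) * (1 + r / (x + y)))) :
    ∀ y ≥ (1 : ℝ), μ {ω | Y ω ≤ y} = ENNReal.ofReal (1 - 1 / y) := by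
  refine measure_fst_le_eq_of_cdf (Y := X) (r := r) fun y x hy hx => ?_
  simpa only [and_comm, mul_comm, add_comm] using hcdf x y hx hy

theorem measure_setOf_eq_eq_zero_of_cdf [IsFiniteMeasure μ] (hX : Measurable X)
    (hF : ∀ x ≥ (1 : ℝ), μ {ω | X ω ≤ x} = ENNReal.ofReal (1 - 1 / x)) {a : ℝ} (ha : 1 ≤ a) :
    μ {ω | X ω = a} = 0 := by
  have hF_pos : ∀ s, 0 < s → μ {ω | X ω ≤ s} = ENNReal.ofReal (1 - 1 / s) := by
    intro s hs
    rcases le_total 1 s with h | h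
    · exact hF s h
    · -- `ofReal` truncates `1 - 1 / s < 0` to `0`, matching `μ {X ≤ s} ≤ μ {X ≤ 1} = 0`.
      rw [ENNReal.ofReal_of_nonpos (by rw [sub_nonpos, le_div_iff₀ hs]; linarith)]
      exact measure_mono_null (ofPred_subset_ofPred.2 fun ω hω => hω.trans h)
        (by simp [hF 1 le_rfl])
  have ha0 : 0 < a := by linarith
  have hcont : ContinuousAt (fun s => ENNReal.ofReal (1 - 1 / s)) a :=
    ENNReal.continuous_ofReal.continuousAt.comp
      (continuousAt_const.sub (continuousAt_const.div continuousAt_id ha0.ne'))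
  refine measure_setOf_eq_eq_zero_of_tendsto hX ?_
  rw [hF_pos a ha0]
  refine (hcont.tendsto.mono_left nhdsWithin_le_nhds).congr' ?_
  filter_upwards [eventually_nhdsWithin_of_eventually_nhds (eventually_gt_nhds ha0)]
    with s hs using (hF_pos s hs).symm

theorem measureReal_one_div_le_and_one_div_le_of_cdf [IsProbabilityMeasure μ] (hr : 0 ≤ r)
    (hX : Measurable X) (hY : Measurable Y)
    (hcdf : ∀ x y : ℝ, 1 ≤ x → 1 ≤ y →
      μ {ω | X ω ≤ x ∧ Y ω ≤ y} =
        ENNReal.ofReal ((1 - 1 / x) * (1 - 1 / y) * (1 + r / (x + y))))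
    {u v : ℝ} (hu : u ∈ Ioc (0 : ℝ) 1) (hv : v ∈ Ioc (0 : ℝ) 1) :
    μ.real {ω | 1 / u ≤ X ω ∧ 1 / v ≤ Y ω} = u * v * (1 + r * (1 - u) * (1 - v) / (u + v)) := by
  obtain ⟨hu0, hu1⟩ := hu
  obtain ⟨hv0, hv1⟩ := hv
  have ha : 1 ≤ 1 / u := one_le_one_div hu0 hu1
  have hb : 1 ≤ 1 / v := one_le_one_div hv0 hv1
  have hFX := measure_fst_le_eq_of_cdf hcdf
  have hFY := measure_snd_le_eq_of_cdf hcdf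
  have h1u : 0 ≤ 1 - u := by linarith
  have h1v : 0 ≤ 1 - v := by linarith
  rw [measureReal_setOf_le_and_le hX hY (measure_setOf_eq_eq_zero_of_cdf hX hFX ha)
    (measure_setOf_eq_eq_zero_of_cdf hY hFY hb)]
  simp only [measureReal_def, hFX _ ha, hFY _ hb, hcdf _ _ ha hb, one_div_one_div]
  rw [ENNReal.toReal_ofReal h1u, ENNReal.toReal_ofReal h1v,
    ENNReal.toReal_ofReal (mul_nonneg (mul_nonneg h1u h1v) (by positivity))]
  field_simp
  ring

end

theorem tendsto_inv_mul_survival_formula (r : ℝ) {x y : ℝ} (hx : 0 < x) (hy : 0 < y) :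
    Tendsto (fun t => t⁻¹ *
        (t * x * (t * y) * (1 + r * (1 - t * x) * (1 - t * y) / (t * x + t * y))))
      (𝓝[>] 0) (𝓝 (r * x * y / (x + y))) := by
  have hg : Tendsto (fun t => t * x * y + r * x * y * ((1 - t * x) * (1 - t * y)) / (x + y))
      (𝓝[>] 0) (𝓝 (r * x * y / (x + y))) := by
    have hcont : Continuous
        fun t => t * x * y + r * x * y * ((1 - t * x) * (1 - t * y)) / (x + y) := by
      fun_prop
    simpa using (hcont.tendsto 0).mono_left nhdsWithin_le_nhds
  refine hg.congr' ?_
  filter_upwards [self_mem_nhdsWithin] with t (ht : 0 < t)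
  field_simp

theorem stmt16_general {Ω : Type*} [MeasurableSpace Ω] (P : Measure Ω) [IsProbabilityMeasure P]
    (r : ℝ) (hr : r ∈ Icc (0 : ℝ) 1)
    (X Y : Ω → ℝ) (hX : Measurable X) (hY : Measurable Y)
    (hcdf : ∀ x y : ℝ, 1 ≤ x → 1 ≤ y →
      P {ω | X ω ≤ x ∧ Y ω ≤ y} =
        ENNReal.ofReal ((1 - 1 / x) * (1 - 1 / y) * (1 + r / (x + y)))) :
    (∀ x ≥ (1 : ℝ), P {ω | X ω ≤ x} = ENNReal.ofReal (1 - 1 / x)) ∧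
    (∀ y ≥ (1 : ℝ), P {ω | Y ω ≤ y} = ENNReal.ofReal (1 - 1 / y)) ∧
    (∀ u v : ℝ, u ∈ Ioc (0 : ℝ) 1 → v ∈ Ioc (0 : ℝ) 1 →
      P {ω | 1 / u ≤ X ω ∧ 1 / v ≤ Y ω} =
        ENNReal.ofReal (u * v * (1 + r * (1 - u) * (1 - v) / (u + v)))) ∧
    ∀ x > (0 : ℝ), ∀ y > (0 : ℝ),
      Tendsto (fun t : ℝ =>
          t⁻¹ * (P {ω | 1 / (t * x) ≤ X ω ∧ 1 / (t * y) ≤ Y ω}).toReal)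
        (𝓝[>] 0) (𝓝 (r * x * y / (x + y))) := by
  have hsurv := fun u v (hu : u ∈ Ioc (0 : ℝ) 1) (hv : v ∈ Ioc (0 : ℝ) 1) =>
    measureReal_one_div_le_and_one_div_le_of_cdf hr.1 hX hY hcdf hu hv
  refine ⟨measure_fst_le_eq_of_cdf hcdf, measure_snd_le_eq_of_cdf hcdf,
    fun u v hu hv => by rw [← ofReal_measureReal, hsurv u v hu hv], fun x hx y hy => ?_⟩
  refine (tendsto_inv_mul_survival_formula r hx hy).congr' ?_
  filter_upwards [Ioc_mem_nhdsGT (lt_min (one_div_pos.2 hx) (one_div_pos.2 hy))] with t ⟨ht0, ht⟩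
  have htx : t * x ∈ Ioc (0 : ℝ) 1 :=
    ⟨by positivity, (le_div_iff₀ hx).1 (ht.trans (min_le_left _ _))⟩
  have hty : t * y ∈ Ioc (0 : ℝ) 1 :=
    ⟨by positivity, (le_div_iff₀ hy).1 (ht.trans (min_le_right _ _))⟩
  rw [← measureReal_def, hsurv _ _ htx hty]

theorem stmt16 {Ω : Type*} [MeasurableSpace Ω] (P : Measure Ω) [IsProbabilityMeasure P]
    (r : ℝ) (hr : r ∈ Icc (0 : ℝ) 1)
    (X Y : Ω → ℝ) (hX : Measurable X) (hY : Measurable Y)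
    (hsupp : ∀ ω, 1 ≤ X ω ∧ 1 ≤ Y ω)
    (hcdf : ∀ x y : ℝ, 1 ≤ x → 1 ≤ y →
      P {ω | X ω ≤ x ∧ Y ω ≤ y} =
        ENNReal.ofReal ((1 - 1 / x) * (1 - 1 / y) * (1 + r / (x + y)))) :
    (∀ x ≥ (1 : ℝ), P {ω | X ω ≤ x} = ENNReal.ofReal (1 - 1 / x)) ∧
    (∀ y ≥ (1 : ℝ), P {ω | Y ω ≤ y} = ENNReal.ofReal (1 - 1 / y)) ∧
    (∀ u v : ℝ, u ∈ Ioc (0 : ℝ) 1 → v ∈ Ioc (0 : ℝ) 1 →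
      P {ω | 1 / u ≤ X ω ∧ 1 / v ≤ Y ω} =
        ENNReal.ofReal (u * v * (1 + r * (1 - u) * (1 - v) / (u + v)))) ∧
    ∀ x > (0 : ℝ), ∀ y > (0 : ℝ),
      Tendsto (fun t : ℝ =>
          t⁻¹ * (P {ω | 1 / (t * x) ≤ X ω ∧ 1 / (t * y) ≤ Y ω}).toReal)
        (𝓝[>] 0) (𝓝 (r * x * y / (x + y))) :=
  stmt16_general P r hr X Y hX hY hcdf
end

section
/- Fix r ∈ (0,1] and p ∈ [1,∞]. For every θ ∈ (0,π/2), ∬_{{(x,y) ∈ (0,∞)² : y ≤ min(x·tanθ, y_p(x))}} 2r·x·y/(x+y)³ dx dy = 2r·∫₀^θ ‖(sinϑ, cosϑ)‖_p · (sinϑ + cosϑ)^{−3} dϑ. (This identifies the absolutely continuous part of the spectral measure of the mixture model, whose limit measure Λ satisfies Λ([0,x]×[0,y]) = r·xy/(x+y) and hence has density λ(x,y) = 2rxy/(x+y)³ on (0,∞)².) -/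
open MeasureTheory Set Real Filter Topology
open scoped ENNReal

noncomputable section

/-- The `L_p` norm on `ℝ²`, for `p ∈ [1,∞]`. -/
def lpnorm (p : ℝ≥0∞) (z : ℝ × ℝ) : ℝ :=
  if p = ⊤ then max |z.1| |z.2|
  else (|z.1| ^ p.toReal + |z.2| ^ p.toReal) ^ (1 / p.toReal)

/-- The function `y_p : [0,∞) → [0,∞]`: for `p < ∞`, `y_p(x) = ∞` on `[0,1]` and
`y_p(x) = (1 + 1/(x^p - 1))^{1/p}` on `(1,∞)`; for `p = ∞`, `y_∞(x) = ∞` on `[0,1)`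
and `y_∞(x) = 1` on `[1,∞)`. -/
def ypR (p : ℝ≥0∞) (x : ℝ) : ℝ≥0∞ :=
  if p = ⊤ then (if x < 1 then ⊤ else 1)
  else if x ≤ 1 then ⊤
  else ENNReal.ofReal ((1 + 1 / (x ^ p.toReal - 1)) ^ (1 / p.toReal))

/-! In polar coordinates `(x, y) = (ρ cos ϑ, ρ sin ϑ)` the density `xy/(x+y)³` becomes
`ρ⁻¹ · sin ϑ cos ϑ / (sin ϑ + cos ϑ)³`, the constraint `y ≤ x tan θ` with `x, y > 0` becomes
`ϑ ∈ (0, θ]`, and `y ≤ y_p(x)` says `‖(1/x, 1/y)‖_p ≥ 1` (up to a null set when `p = ∞`). By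
homogeneity of the norm the latter is `ρ ≤ ‖(sin ϑ, cos ϑ)‖_p / (sin ϑ cos ϑ)`, so integrating out
`ρ` against `ρ dρ` leaves exactly the angular integrand. -/

lemma lpnorm_nonneg (p : ℝ≥0∞) (z : ℝ × ℝ) : 0 ≤ lpnorm p z := by
  unfold lpnorm
  split_ifs
  · exact le_max_of_le_left (abs_nonneg _)
  · positivity

lemma lpnorm_top (z : ℝ × ℝ) : lpnorm ⊤ z = max |z.1| |z.2| := if_pos rfl

lemma continuous_lpnorm (p : ℝ≥0∞) : Continuous (lpnorm p) := by
  unfold lpnorm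
  split_ifs
  · fun_prop
  · exact ((continuous_fst.abs.rpow_const fun _ => Or.inr ENNReal.toReal_nonneg).add
      (continuous_snd.abs.rpow_const fun _ => Or.inr ENNReal.toReal_nonneg)).rpow_const
      fun _ => Or.inr (by positivity)

lemma lpnorm_mul_left {p : ℝ≥0∞} (hp : p ≠ 0) (a x y : ℝ) :
    lpnorm p (a * x, a * y) = |a| * lpnorm p (x, y) := by
  unfold lpnorm
  split_ifs with hptop
  · simp only [abs_mul, mul_max_of_nonneg _ _ (abs_nonneg a)]
  · have ht : 0 < p.toReal := ENNReal.toReal_pos hp hptop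
    simp only [abs_mul, Real.mul_rpow (abs_nonneg a) (abs_nonneg _), ← mul_add]
    rw [Real.mul_rpow (by positivity) (by positivity), ← Real.rpow_mul (abs_nonneg a),
      mul_one_div_cancel ht.ne', Real.rpow_one]

lemma ofReal_le_ypR_iff_of_ne_top {p : ℝ≥0∞} (hp : p ≠ 0) (hptop : p ≠ ⊤) {u v : ℝ}
    (hu : 0 < u) (hv : 0 < v) :
    ENNReal.ofReal v ≤ ypR p u ↔ 1 ≤ lpnorm p (u⁻¹, v⁻¹) := by
  have ht : 0 < p.toReal := ENNReal.toReal_pos hp hptop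
  have hsum : 1 ≤ lpnorm p (u⁻¹, v⁻¹) ↔ 1 ≤ (u ^ p.toReal)⁻¹ + (v ^ p.toReal)⁻¹ := by
    rw [lpnorm, if_neg hptop, abs_of_pos (inv_pos.2 hu), abs_of_pos (inv_pos.2 hv),
      Real.inv_rpow hu.le, Real.inv_rpow hv.le]
    have h := Real.rpow_le_rpow_iff (z := 1 / p.toReal) zero_le_one
      (add_nonneg (inv_nonneg.2 (Real.rpow_nonneg hu.le p.toReal))
        (inv_nonneg.2 (Real.rpow_nonneg hv.le p.toReal))) (by positivity)
    rwa [Real.one_rpow] at h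
  rw [hsum, ypR, if_neg hptop]
  split_ifs with hu1
  · have : 1 ≤ (u ^ p.toReal)⁻¹ :=
      (one_le_inv₀ (by positivity)).2 (Real.rpow_le_one hu.le hu1 ht.le)
    simp only [le_top, true_iff]
    linarith [inv_nonneg.2 (Real.rpow_nonneg hv.le p.toReal)]
  · have ha : 1 < u ^ p.toReal := Real.one_lt_rpow (not_le.1 hu1) ht
    rw [ENNReal.ofReal_le_ofReal_iff (by positivity),
      ← Real.rpow_le_rpow_iff hv.le (by positivity) ht, ← Real.rpow_mul (by positivity),
      one_div_mul_cancel ht.ne', Real.rpow_one]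
    have hb : 0 < v ^ p.toReal := by positivity
    generalize u ^ p.toReal = a at ha
    generalize v ^ p.toReal = b at hb
    -- both sides say `0 ≤ a + b - a * b`
    have h₁ : 1 + 1 / (a - 1) - b = (a + b - a * b) / (a - 1) := by
      field_simp [(sub_pos.2 ha).ne']; ring
    have h₂ : a⁻¹ + b⁻¹ - 1 = (a + b - a * b) / (a * b) := by
      field_simp; ring
    rw [← sub_nonneg (b := b), h₁, ← sub_nonneg (b := (1 : ℝ)), h₂, le_div_iff₀ (sub_pos.2 ha),
      le_div_iff₀ (by positivity), zero_mul, zero_mul]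

lemma ofReal_le_ypR_top_iff {u v : ℝ} : ENNReal.ofReal v ≤ ypR ⊤ u ↔ u < 1 ∨ v ≤ 1 := by
  rw [ypR, if_pos rfl]
  split_ifs with hu
  · simp [hu]
  · simp [hu, ENNReal.ofReal_le_one]

lemma ofReal_le_ypR_of_one_lt_lpnorm {p : ℝ≥0∞} (hp : p ≠ 0) {u v : ℝ} (hu : 0 < u) (hv : 0 < v)
    (h : 1 < lpnorm p (u⁻¹, v⁻¹)) : ENNReal.ofReal v ≤ ypR p u := by
  by_cases hptop : p = ⊤
  · subst hptop
    rw [ofReal_le_ypR_top_iff]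
    rw [lpnorm_top, abs_inv, abs_inv, abs_of_pos hu, abs_of_pos hv, lt_max_iff,
      one_lt_inv₀ hu, one_lt_inv₀ hv] at h
    exact h.imp_right le_of_lt
  · exact (ofReal_le_ypR_iff_of_ne_top hp hptop hu hv).2 h.le

lemma one_le_lpnorm_of_ofReal_le_ypR {p : ℝ≥0∞} (hp : p ≠ 0) {u v : ℝ} (hu : 0 < u) (hv : 0 < v)
    (h : ENNReal.ofReal v ≤ ypR p u) : 1 ≤ lpnorm p (u⁻¹, v⁻¹) := by
  by_cases hptop : p = ⊤
  · subst hptop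
    rw [ofReal_le_ypR_top_iff] at h
    rw [lpnorm_top, abs_inv, abs_inv, abs_of_pos hu, abs_of_pos hv, le_max_iff,
      one_le_inv₀ hu, one_le_inv₀ hv]
    exact h.imp_left le_of_lt
  · exact (ofReal_le_ypR_iff_of_ne_top hp hptop hu hv).1 h

/-- With `R = ‖(s, c)‖_p / (s c)` the set lies between `Ioo 0 R` and `Ioc 0 R`; for `p = ∞`
it can be either. -/
lemma volume_radialSection {p : ℝ≥0∞} (hp : p ≠ 0) {s c : ℝ} (hs : 0 < s) (hc : 0 < c) :
    volume {ρ : ℝ | 0 < ρ ∧ ENNReal.ofReal (ρ * s) ≤ ypR p (ρ * c)} =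
      ENNReal.ofReal (lpnorm p (s, c) / (s * c)) := by
  set R := lpnorm p (s, c) / (s * c) with hR
  have hscale (ρ : ℝ) (hρ : 0 < ρ) : lpnorm p ((ρ * c)⁻¹, (ρ * s)⁻¹) = R / ρ := by
    have h := lpnorm_mul_left hp (ρ * s * c)⁻¹ s c
    rw [abs_of_pos (by positivity)] at h
    rw [hR]
    convert h using 3 <;> field_simp
  apply le_antisymm
  · calc _ ≤ volume (Ioc 0 R) := by
          refine measure_mono fun ρ ⟨hρ, h⟩ => ⟨hρ, ?_⟩
          have := one_le_lpnorm_of_ofReal_le_ypR hp (by positivity) (by positivity) h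
          rwa [hscale ρ hρ, one_le_div hρ] at this
      _ = _ := by rw [Real.volume_Ioc, sub_zero]
  · calc ENNReal.ofReal R = volume (Ioo 0 R) := by rw [Real.volume_Ioo, sub_zero]
      _ ≤ _ := by
          refine measure_mono fun ρ ⟨hρ, h⟩ => ⟨hρ, ?_⟩
          exact ofReal_le_ypR_of_one_lt_lpnorm hp (by positivity) (by positivity)
            (by rwa [hscale ρ hρ, one_lt_div hρ])

lemma measurable_ypR (p : ℝ≥0∞) : Measurable (ypR p) := by
  unfold ypR
  split_ifs
  · exact Measurable.ite measurableSet_Iio measurable_const measurable_const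
  · exact Measurable.ite measurableSet_Iic measurable_const (by fun_prop)

lemma cos_pos_and_sin_pos_iff {ϑ : ℝ} (hϑ : ϑ ∈ Ioo (-π) π) :
    0 < cos ϑ ∧ 0 < sin ϑ ↔ ϑ ∈ Ioo 0 (π / 2) := by
  refine ⟨fun ⟨hc, hs⟩ => ⟨?_, ?_⟩, fun h => ⟨cos_pos_of_mem_Ioo ⟨by linarith [h.1, pi_pos],
    h.2⟩, sin_pos_of_pos_of_lt_pi h.1 (by linarith [h.2, pi_pos])⟩⟩
  · by_contra! h
    exact hs.not_ge (sin_nonpos_of_nonpos_of_neg_pi_le h hϑ.1.le)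
  · by_contra! h
    exact hc.not_ge (cos_nonpos_of_pi_div_two_le_of_le h (by linarith [hϑ.2]))

lemma sin_le_cos_mul_tan_iff {ϑ θ : ℝ} (hϑ : ϑ ∈ Ioo (-(π / 2)) (π / 2))
    (hθ : θ ∈ Ioo (-(π / 2)) (π / 2)) : sin ϑ ≤ cos ϑ * tan θ ↔ ϑ ≤ θ := by
  have hc : 0 < cos ϑ := cos_pos_of_mem_Ioo hϑ
  rw [← strictMonoOn_tan.le_iff_le hϑ hθ, tan_eq_sin_div_cos ϑ, div_le_iff₀ hc, mul_comm]

/-- The finite part of `C_{p,θ}`. -/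
def regionC (p : ℝ≥0∞) (θ : ℝ) : Set (ℝ × ℝ) :=
  {z | 0 < z.1 ∧ 0 < z.2 ∧ z.2 ≤ z.1 * tan θ ∧ ENNReal.ofReal z.2 ≤ ypR p z.1}

lemma measurableSet_regionC (p : ℝ≥0∞) (θ : ℝ) : MeasurableSet (regionC p θ) :=
  (measurableSet_lt measurable_const measurable_fst).inter <|
    (measurableSet_lt measurable_const measurable_snd).inter <|
      (measurableSet_le measurable_snd (measurable_fst.mul_const _)).inter <|
        measurableSet_le measurable_snd.ennreal_ofReal ((measurable_ypR p).comp measurable_fst)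

lemma polar_mem_regionC_iff {p : ℝ≥0∞} {θ ϑ ρ : ℝ} (hθ : θ ∈ Ioo (-(π / 2)) (π / 2))
    (hϑ : ϑ ∈ Ioo (-π) π) (hρ : 0 < ρ) :
    (ρ * cos ϑ, ρ * sin ϑ) ∈ regionC p θ ↔
      ϑ ∈ Ioc 0 θ ∧ ENNReal.ofReal (ρ * sin ϑ) ≤ ypR p (ρ * cos ϑ) := by
  simp only [regionC, mem_ofPred_eq, mul_pos_iff_of_pos_left hρ, mul_assoc,
    mul_le_mul_iff_right₀ hρ, ← and_assoc, cos_pos_and_sin_pos_iff hϑ]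
  have hangle : ϑ ∈ Ioo 0 (π / 2) ∧ sin ϑ ≤ cos ϑ * tan θ ↔ ϑ ∈ Ioc 0 θ := by
    refine ⟨fun ⟨h, htan⟩ => ⟨h.1, ?_⟩, fun ⟨h0, hle⟩ => ⟨⟨h0, hle.trans_lt hθ.2⟩, ?_⟩⟩
    · exact (sin_le_cos_mul_tan_iff ⟨by linarith [h.1, pi_pos], h.2⟩ hθ).1 htan
    · exact (sin_le_cos_mul_tan_iff ⟨by linarith [pi_pos], hle.trans_lt hθ.2⟩ hθ).2 hle
  rw [hangle]

lemma mul_density_polar {ρ : ℝ} (hρ : ρ ≠ 0) {c s : ℝ} (hcs : c + s ≠ 0) :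
    ρ * (ρ * c * (ρ * s) / (ρ * c + ρ * s) ^ 3) = c * s / (c + s) ^ 3 := by
  rw [← mul_add]
  field_simp

lemma lintegral_radial_regionC {p : ℝ≥0∞} (hp : p ≠ 0) {θ ϑ : ℝ}
    (hθ : θ ∈ Ioo (-(π / 2)) (π / 2)) (hϑ : ϑ ∈ Ioo (-π) π) :
    ∫⁻ ρ in Ioi 0, ENNReal.ofReal ρ * (regionC p θ).indicator
        (fun z => ENNReal.ofReal (z.1 * z.2 / (z.1 + z.2) ^ 3)) (ρ * cos ϑ, ρ * sin ϑ) =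
      (Ioc 0 θ).indicator
        (fun ϑ => ENNReal.ofReal (lpnorm p (sin ϑ, cos ϑ) / (sin ϑ + cos ϑ) ^ 3)) ϑ := by
  by_cases hmem : ϑ ∈ Ioc 0 θ
  swap
  · rw [indicator_of_notMem hmem]
    refine (setLIntegral_congr_fun measurableSet_Ioi fun ρ hρ => ?_).trans lintegral_zero
    rw [indicator_of_notMem fun h => hmem ((polar_mem_regionC_iff hθ hϑ hρ).1 h).1, mul_zero]
  obtain ⟨hc, hs⟩ := (cos_pos_and_sin_pos_iff hϑ).2 ⟨hmem.1, hmem.2.trans_lt hθ.2⟩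
  set T := {ρ : ℝ | 0 < ρ ∧ ENNReal.ofReal (ρ * sin ϑ) ≤ ypR p (ρ * cos ϑ)}
  have hT : MeasurableSet T :=
    (measurableSet_lt measurable_const measurable_id).inter <| measurableSet_le
      (measurable_id.mul_const _).ennreal_ofReal
      ((measurable_ypR p).comp (measurable_id.mul_const _))
  calc _ = ∫⁻ ρ in Ioi 0, T.indicator
        (fun _ => ENNReal.ofReal (cos ϑ * sin ϑ / (cos ϑ + sin ϑ) ^ 3)) ρ := by
        refine setLIntegral_congr_fun measurableSet_Ioi fun ρ hρ => ?_
        by_cases hρT : ρ ∈ T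
        · rw [indicator_of_mem ((polar_mem_regionC_iff hθ hϑ hρ).2 ⟨hmem, hρT.2⟩),
            indicator_of_mem hρT, ← ENNReal.ofReal_mul hρ.le,
            mul_density_polar hρ.ne' (by positivity)]
        · rw [indicator_of_notMem (fun h => hρT ⟨hρ, ((polar_mem_regionC_iff hθ hϑ hρ).1 h).2⟩),
            indicator_of_notMem hρT, mul_zero]
    _ = ENNReal.ofReal (cos ϑ * sin ϑ / (cos ϑ + sin ϑ) ^ 3) * volume T := by
        rw [lintegral_indicator_const hT, Measure.restrict_apply hT,
          inter_eq_left.2 fun ρ hρ => hρ.1]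
    _ = _ := by
        rw [volume_radialSection hp hs hc, indicator_of_mem hmem,
          ← ENNReal.ofReal_mul (by positivity)]
        congr 1
        field_simp
        ring

lemma lintegral_regionC {p : ℝ≥0∞} (hp : p ≠ 0) {θ : ℝ} (hθ : θ ∈ Ioo (-(π / 2)) (π / 2)) :
    ∫⁻ z in regionC p θ, ENNReal.ofReal (z.1 * z.2 / (z.1 + z.2) ^ 3) =
      ∫⁻ ϑ in Ioc 0 θ, ENNReal.ofReal (lpnorm p (sin ϑ, cos ϑ) / (sin ϑ + cos ϑ) ^ 3) := by
  set f : ℝ × ℝ → ℝ≥0∞ := fun z => ENNReal.ofReal (z.1 * z.2 / (z.1 + z.2) ^ 3)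
  have hf : Measurable ((regionC p θ).indicator f) :=
    (Measurable.ennreal_ofReal (by fun_prop)).indicator (measurableSet_regionC p θ)
  calc ∫⁻ z in regionC p θ, f z = ∫⁻ z, (regionC p θ).indicator f z :=
        (lintegral_indicator (measurableSet_regionC p θ) f).symm
    _ = ∫⁻ q in Ioi 0 ×ˢ Ioo (-π) π,
          ENNReal.ofReal q.1 • (regionC p θ).indicator f (polarCoord.symm q) := by
        rw [← lintegral_comp_polarCoord_symm, polarCoord_target]
    _ = ∫⁻ ϑ in Ioo (-π) π, ∫⁻ ρ in Ioi 0,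
          ENNReal.ofReal ρ * (regionC p θ).indicator f (ρ * cos ϑ, ρ * sin ϑ) := by
        rw [Measure.volume_eq_prod, setLIntegral_prod_symm]
        · rfl
        · exact (measurable_fst.ennreal_ofReal.smul (hf.comp (by fun_prop))).aemeasurable
    _ = ∫⁻ ϑ in Ioo (-π) π, (Ioc 0 θ).indicator
          (fun ϑ => ENNReal.ofReal (lpnorm p (sin ϑ, cos ϑ) / (sin ϑ + cos ϑ) ^ 3)) ϑ :=
        setLIntegral_congr_fun measurableSet_Ioo fun ϑ hϑ => lintegral_radial_regionC hp hθ hϑ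
    _ = _ := by
        rw [lintegral_indicator measurableSet_Ioc, Measure.restrict_restrict measurableSet_Ioc,
          inter_eq_left.2 ((Ioc_subset_Ioo_right (hθ.2.trans (by linarith [pi_pos]))).trans
            (Ioo_subset_Ioo_left (by linarith [pi_pos])))]

lemma sin_add_cos_pos {ϑ : ℝ} (h0 : 0 ≤ ϑ) (h1 : ϑ < π / 2) : 0 < sin ϑ + cos ϑ := by
  have := sin_nonneg_of_nonneg_of_le_pi h0 (by linarith [pi_pos])
  have := cos_pos_of_mem_Ioo ⟨by linarith [pi_pos], h1⟩
  positivity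

lemma ofReal_intervalIntegral_eq_lintegral_Ioc {f : ℝ → ℝ} {a b : ℝ} (hab : a ≤ b)
    (hf : ContinuousOn f (Icc a b)) (hf0 : ∀ x ∈ Icc a b, 0 ≤ f x) :
    ENNReal.ofReal (∫ x in a..b, f x) = ∫⁻ x in Ioc a b, ENNReal.ofReal (f x) := by
  rw [intervalIntegral.integral_of_le hab, ofReal_integral_eq_lintegral_ofReal
    (hf.integrableOn_Icc.mono_set Ioc_subset_Icc_self)]
  filter_upwards [ae_restrict_mem measurableSet_Ioc] with x hx
  exact hf0 x (Ioc_subset_Icc_self hx)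

theorem stmt17_general (r : ℝ) (p : ℝ≥0∞) (hp : 1 ≤ p) :
    ∀ θ ∈ Ioo (0 : ℝ) (π / 2),
      (∫⁻ z in {z : ℝ × ℝ | 0 < z.1 ∧ 0 < z.2 ∧ z.2 ≤ z.1 * Real.tan θ ∧
          ENNReal.ofReal z.2 ≤ ypR p z.1},
        ENNReal.ofReal (2 * r * z.1 * z.2 / (z.1 + z.2) ^ 3) ∂volume) =
      ENNReal.ofReal (2 * r *
        ∫ ϑ in (0 : ℝ)..θ,
          lpnorm p (Real.sin ϑ, Real.cos ϑ) / (Real.sin ϑ + Real.cos ϑ) ^ 3) := by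
  intro θ hθ
  have hp0 : p ≠ 0 := (zero_lt_one.trans_le hp).ne'
  have hden (ϑ : ℝ) (hϑ : ϑ ∈ Icc 0 θ) : 0 < sin ϑ + cos ϑ :=
    sin_add_cos_pos hϑ.1 (hϑ.2.trans_lt hθ.2)
  have hcont : ContinuousOn (fun ϑ => lpnorm p (sin ϑ, cos ϑ) / (sin ϑ + cos ϑ) ^ 3) (Icc 0 θ) :=
    ((continuous_lpnorm p).comp (continuous_sin.prodMk continuous_cos)).continuousOn.div
      (by fun_prop) fun ϑ hϑ => (pow_pos (hden ϑ hϑ) 3).ne'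
  have hnonneg (ϑ : ℝ) (hϑ : ϑ ∈ Icc 0 θ) :
      0 ≤ lpnorm p (sin ϑ, cos ϑ) / (sin ϑ + cos ϑ) ^ 3 :=
    div_nonneg (lpnorm_nonneg _ _) (pow_pos (hden ϑ hϑ) 3).le
  calc _ = ∫⁻ z in regionC p θ,
        ENNReal.ofReal (2 * r) * ENNReal.ofReal (z.1 * z.2 / (z.1 + z.2) ^ 3) :=
        setLIntegral_congr_fun (measurableSet_regionC p θ) fun z ⟨h1, h2, _⟩ => by
          rw [← ENNReal.ofReal_mul' (by positivity), mul_assoc (2 * r), mul_div_assoc]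
    _ = _ := by
        rw [lintegral_const_mul _ (Measurable.ennreal_ofReal (by fun_prop)),
          lintegral_regionC hp0 ⟨by linarith [hθ.1, pi_pos], hθ.2⟩,
          ← ofReal_intervalIntegral_eq_lintegral_Ioc hθ.1.le hcont hnonneg,
          ← ENNReal.ofReal_mul' (intervalIntegral.integral_nonneg hθ.1.le hnonneg)]

theorem stmt17 (r : ℝ) (hr : r ∈ Ioc (0 : ℝ) 1) (p : ℝ≥0∞) (hp : 1 ≤ p) :
    ∀ θ ∈ Ioo (0 : ℝ) (π / 2),
      (∫⁻ z in {z : ℝ × ℝ | 0 < z.1 ∧ 0 < z.2 ∧ z.2 ≤ z.1 * Real.tan θ ∧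
          ENNReal.ofReal z.2 ≤ ypR p z.1},
        ENNReal.ofReal (2 * r * z.1 * z.2 / (z.1 + z.2) ^ 3) ∂volume) =
      ENNReal.ofReal (2 * r *
        ∫ ϑ in (0 : ℝ)..θ,
          lpnorm p (Real.sin ϑ, Real.cos ϑ) / (Real.sin ϑ + Real.cos ϑ) ^ 3) :=
  stmt17_general r p hp
end
end

section
/- Let N ≥ 2 and let a₁,…,a_N ∈ [−1,1] satisfy min_i a_i < 0 < max_i a_i. On the open interval I = (−1/max_i a_i, −1/min_i a_i) (on which 1 + μa_i > 0 for all i), the function Ψ(μ) = Σ_{i=1}^N a_i/(1 + μa_i) is strictly decreasing, with Ψ(μ) → +∞ as μ decreases to the left endpoint of I and Ψ(μ) → −∞ as μ increases to the right endpoint of I; hence Ψ has a unique zero μ* ∈ I. Moreover, the weight vector p_i = 1/(N(1 + μ* a_i)), i = 1,…,N, is the unique maximizer of the empirical likelihood ∏_{i=1}^N p_i over the constraint set {p ∈ [0,∞)^N : Σ_i p_i = 1, Σ_i p_i a_i = 0}. -/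
open Set Filter Topology
open scoped BigOperators

noncomputable section

/-! Each summand `c / (1 + μ c)` of `Ψ` is non-increasing in `μ`, strictly when `c ≠ 0`. Near
`-1 / max a` the summand with `c = max a` blows up while every summand stays above `min c 0`;
the right endpoint follows by the reflection `μ ↦ -μ`, `a ↦ -a`, and the zero comes from the
intermediate value theorem.

For a feasible `q`, the ratios `r_i = q_i / p_i = N (1 + μ* a_i) q_i` sum to `N` by the two
constraints on `q`, so `log r_i ≤ r_i - 1` gives `∑ log r_i ≤ 0`, with equality only if `r ≡ 1`. -/

lemma one_add_mul_pos_of_le_of_le {μ A B c : ℝ} (hA : 0 < 1 + μ * A) (hB : 0 < 1 + μ * B)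
    (hBc : B ≤ c) (hcA : c ≤ A) : 0 < 1 + μ * c := by
  rcases le_total 0 μ with hμ | hμ
  · nlinarith [mul_le_mul_of_nonneg_left hBc hμ]
  · nlinarith [mul_le_mul_of_nonpos_left hcA hμ]

lemma one_add_mul_pos_of_mem_Ioo {μ A B c : ℝ} (hA : 0 < A) (hB : B < 0)
    (hμ : μ ∈ Ioo (-1 / A) (-1 / B)) (hBc : B ≤ c) (hcA : c ≤ A) : 0 < 1 + μ * c := by
  rw [mem_Ioo, div_lt_iff₀ hA, lt_div_iff_of_neg hB] at hμ
  exact one_add_mul_pos_of_le_of_le (by linarith) (by linarith) hBc hcA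

lemma div_one_add_mul_sub_div_one_add_mul {c x y : ℝ} (hx : 1 + x * c ≠ 0) (hy : 1 + y * c ≠ 0) :
    c / (1 + x * c) - c / (1 + y * c) = c ^ 2 * (y - x) / ((1 + x * c) * (1 + y * c)) := by
  rw [div_sub_div _ _ hx hy]
  ring

lemma div_one_add_mul_le_div_one_add_mul {c x y : ℝ} (hx : 0 < 1 + x * c) (hy : 0 < 1 + y * c)
    (hxy : x ≤ y) : c / (1 + y * c) ≤ c / (1 + x * c) := by
  rw [← sub_nonneg, div_one_add_mul_sub_div_one_add_mul hx.ne' hy.ne']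
  have := sub_nonneg.2 hxy
  positivity

lemma div_one_add_mul_lt_div_one_add_mul {c x y : ℝ} (hc : c ≠ 0) (hx : 0 < 1 + x * c)
    (hy : 0 < 1 + y * c) (hxy : x < y) : c / (1 + y * c) < c / (1 + x * c) := by
  rw [← sub_pos, div_one_add_mul_sub_div_one_add_mul hx.ne' hy.ne']
  have := sub_pos.2 hxy
  positivity

lemma min_le_div_one_add_mul {c μ : ℝ} (hμ : μ ≤ 0) (h : 0 < 1 + μ * c) :
    min c 0 ≤ c / (1 + μ * c) := by
  rcases le_total 0 c with hc | hc
  · exact (min_le_right c 0).trans (by positivity)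
  · rw [min_eq_left hc, le_div_iff₀ h]
    nlinarith [mul_nonneg_of_nonpos_of_nonpos hμ hc]

lemma one_div_one_add_mul {c μ : ℝ} (h : 1 + μ * c ≠ 0) :
    1 / (1 + μ * c) = 1 - μ * (c / (1 + μ * c)) := by
  field_simp
  ring

lemma existsUnique_eq_zero_of_strictAntiOn_Ioo {f : ℝ → ℝ} {l r : ℝ} (hlr : l < r)
    (hcont : ContinuousOn f (Ioo l r)) (hanti : StrictAntiOn f (Ioo l r))
    (hl : Tendsto f (𝓝[>] l) atTop) (hr : Tendsto f (𝓝[<] r) atBot) :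
    ∃! x, x ∈ Ioo l r ∧ f x = 0 := by
  obtain ⟨x₁, hfx₁, hx₁⟩ := ((hl.eventually_ge_atTop 0).and (Ioo_mem_nhdsGT hlr)).exists
  obtain ⟨x₂, hfx₂, hx₂⟩ := ((hr.eventually_le_atBot 0).and (Ioo_mem_nhdsLT hlr)).exists
  obtain ⟨x, hx, hfx⟩ := isPreconnected_Ioo.intermediate_value hx₂ hx₁ hcont ⟨hfx₂, hfx₁⟩
  exact ⟨x, ⟨hx, hfx⟩, fun y hy => hanti.injOn hy.1 hx (hy.2.trans hfx.symm)⟩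

section

variable {ι : Type*} [Fintype ι]

def elScore (a : ι → ℝ) (μ : ℝ) : ℝ := ∑ i, a i / (1 + μ * a i)

def elWeight (a : ι → ℝ) (μ : ℝ) (i : ι) : ℝ := 1 / (Fintype.card ι * (1 + μ * a i))

lemma prod_lt_one_of_sum_eq_card {r : ι → ℝ} (hpos : ∀ i, 0 < r i)
    (hsum : ∑ i, r i = Fintype.card ι) (hne : r ≠ 1) : ∏ i, r i < 1 := by
  obtain ⟨j, hj⟩ := Function.ne_iff.1 hne
  have hlog : ∑ i, Real.log (r i) < 0 := calc
    ∑ i, Real.log (r i) < ∑ i, (r i - 1) :=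
      Finset.sum_lt_sum (fun i _ => Real.log_le_sub_one_of_pos (hpos i))
        ⟨j, Finset.mem_univ j, Real.log_lt_sub_one_of_pos (hpos j) hj⟩
    _ = 0 := by simp [Finset.sum_sub_distrib, hsum]
  rwa [← Real.log_prod fun i _ => (hpos i).ne',
    Real.log_neg_iff (Finset.prod_pos fun i _ => hpos i)] at hlog

lemma prod_lt_prod_of_sum_div_eq_card {p q : ι → ℝ} (hp : ∀ i, 0 < p i) (hq : ∀ i, 0 ≤ q i)
    (hsum : ∑ i, q i / p i = Fintype.card ι) (hne : q ≠ p) : ∏ i, q i < ∏ i, p i := by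
  have hP : 0 < ∏ i, p i := Finset.prod_pos fun i _ => hp i
  by_cases hq0 : ∃ j, q j = 0
  · obtain ⟨j, hj⟩ := hq0
    rwa [Finset.prod_eq_zero (Finset.mem_univ j) hj]
  simp only [not_exists] at hq0
  have hr : ∏ i, (q i / p i) < 1 :=
    prod_lt_one_of_sum_eq_card (fun i => div_pos ((hq i).lt_of_ne' (hq0 i)) (hp i)) hsum
      fun h => hne (funext fun i => (div_eq_one_iff_eq (hp i).ne').1 (congrFun h i))
  rwa [Finset.prod_div_distrib, div_lt_one hP] at hr

variable (a : ι → ℝ)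

lemma elScore_neg (μ : ℝ) : elScore (-a) μ = -elScore a (-μ) := by
  simp only [elScore, Pi.neg_apply, ← Finset.sum_neg_distrib]
  congr 1 with i
  ring

lemma elScore_strictAntiOn {i₀ : ι} (hi₀ : a i₀ ≠ 0) :
    StrictAntiOn (elScore a) {μ | ∀ i, 0 < 1 + μ * a i} := fun _ hx _ hy hxy =>
  Finset.sum_lt_sum (fun i _ => div_one_add_mul_le_div_one_add_mul (hx i) (hy i) hxy.le)
    ⟨i₀, Finset.mem_univ _, div_one_add_mul_lt_div_one_add_mul hi₀ (hx i₀) (hy i₀) hxy⟩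

lemma elScore_continuousOn : ContinuousOn (elScore a) {μ | ∀ i, 0 < 1 + μ * a i} :=
  continuousOn_finsetSum _ fun i _ =>
    continuousOn_const.div (by fun_prop) fun _ hμ => (hμ i).ne'

lemma tendsto_div_one_add_mul_nhdsGT {A : ℝ} (hA : 0 < A) :
    Tendsto (fun μ => A / (1 + μ * A)) (𝓝[>] (-1 / A)) atTop := by
  have hlin : Tendsto (fun μ : ℝ => 1 + μ * A) (𝓝[>] (-1 / A)) (𝓝[>] 0) := by
    refine tendsto_nhdsWithin_iff.2 ⟨?_, ?_⟩
    · have h : Continuous fun μ : ℝ => 1 + μ * A := by fun_prop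
      simpa [div_mul_cancel₀ _ hA.ne'] using
        h.continuousWithinAt.tendsto (x := -1 / A) (s := Ioi _)
    · filter_upwards [self_mem_nhdsWithin] with μ hμ
      rw [mem_Ioi, div_lt_iff₀ hA] at hμ
      exact mem_Ioi.2 (by linarith)
  simpa [div_eq_mul_inv] using (tendsto_inv_nhdsGT_zero.comp hlin).const_mul_atTop hA

lemma elScore_tendsto_atTop {A : ℝ} (hA : 0 < A) (hAub : ∀ i, a i ≤ A) {i₀ : ι}
    (hi₀ : a i₀ = A) : Tendsto (elScore a) (𝓝[>] (-1 / A)) atTop := by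
  refine tendsto_atTop_mono' _ ?_
    (tendsto_atTop_add_const_right _ (∑ i, min (a i) 0) (tendsto_div_one_add_mul_nhdsGT hA))
  have hA0 : -1 / A < 0 := by rw [neg_div, neg_lt_zero]; positivity
  filter_upwards [Ioo_mem_nhdsGT hA0] with μ hμ
  have hpos : ∀ i, 0 < 1 + μ * a i := fun i => by
    rw [mem_Ioo, div_lt_iff₀ hA] at hμ
    nlinarith [mul_le_mul_of_nonpos_left (hAub i) hμ.2.le]
  have hterm : ∀ i, min (a i) 0 ≤ a i / (1 + μ * a i) := fun i =>
    min_le_div_one_add_mul hμ.2.le (hpos i)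
  have hsingle := Finset.single_le_sum (f := fun i => a i / (1 + μ * a i) - min (a i) 0)
    (fun i _ => sub_nonneg.2 (hterm i)) (Finset.mem_univ i₀)
  simp only [hi₀, min_eq_right hA.le, sub_zero, Finset.sum_sub_distrib] at hsingle
  simp only [elScore]
  linarith

lemma elScore_tendsto_atBot {B : ℝ} (hB : B < 0) (hBlb : ∀ i, B ≤ a i) {i₀ : ι}
    (hi₀ : a i₀ = B) : Tendsto (elScore a) (𝓝[<] (-1 / B)) atBot := by
  have h := elScore_tendsto_atTop (-a) (neg_pos.2 hB) (fun i => neg_le_neg (hBlb i))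
    (i₀ := i₀) (by simp [hi₀])
  rw [div_neg, ← neg_div, neg_neg] at h
  have hneg : Tendsto Neg.neg (𝓝[<] (-1 / B)) (𝓝[>] (1 / B)) := by
    simpa [neg_div] using tendsto_neg_nhdsLT (a := -1 / B)
  refine (tendsto_neg_atTop_atBot.comp (h.comp hneg)).congr fun μ => ?_
  simp [elScore_neg]

lemma sum_elWeight [Nonempty ι] {μ : ℝ} (hμ : ∀ i, 0 < 1 + μ * a i) (h0 : elScore a μ = 0) :
    ∑ i, elWeight a μ i = 1 := by
  have hn : (Fintype.card ι : ℝ) ≠ 0 := Nat.cast_ne_zero.2 Fintype.card_ne_zero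
  calc ∑ i, elWeight a μ i = (Fintype.card ι : ℝ)⁻¹ * ∑ i, (1 - μ * (a i / (1 + μ * a i))) := by
        rw [Finset.mul_sum]
        refine Finset.sum_congr rfl fun i _ => ?_
        rw [← one_div_one_add_mul (hμ i).ne', elWeight, one_div, one_div, mul_inv]
    _ = 1 := by
        rw [Finset.sum_sub_distrib, ← Finset.mul_sum, ← elScore, h0]
        simp [hn]

lemma sum_elWeight_mul {μ : ℝ} (h0 : elScore a μ = 0) : ∑ i, elWeight a μ i * a i = 0 := by
  calc ∑ i, elWeight a μ i * a i = (Fintype.card ι : ℝ)⁻¹ * elScore a μ := by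
        rw [elScore, Finset.mul_sum]
        refine Finset.sum_congr rfl fun i _ => ?_
        rw [elWeight, one_div_mul_eq_div, div_mul_eq_div_div, div_right_comm, inv_mul_eq_div]
    _ = 0 := by rw [h0, mul_zero]

lemma elWeight_pos {μ : ℝ} (hμ : ∀ i, 0 < 1 + μ * a i) (i : ι) : 0 < elWeight a μ i := by
  have : Nonempty ι := ⟨i⟩
  have := hμ i
  unfold elWeight
  positivity

lemma prod_lt_prod_elWeight {μ : ℝ} (hμ : ∀ i, 0 < 1 + μ * a i) {q : ι → ℝ}
    (hq : ∀ i, 0 ≤ q i) (hq1 : ∑ i, q i = 1) (hqa : ∑ i, q i * a i = 0)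
    (hne : q ≠ elWeight a μ) : ∏ i, q i < ∏ i, elWeight a μ i := by
  refine prod_lt_prod_of_sum_div_eq_card (elWeight_pos a hμ) hq ?_ hne
  calc ∑ i, q i / elWeight a μ i
        = ∑ i, (Fintype.card ι * q i + Fintype.card ι * μ * (q i * a i)) := by
        refine Finset.sum_congr rfl fun i _ => ?_
        rw [elWeight, div_div_eq_mul_div, div_one]
        ring
    _ = Fintype.card ι := by
        rw [Finset.sum_add_distrib, ← Finset.mul_sum, ← Finset.mul_sum, hq1, hqa]
        ring

end

theorem stmt19_general (N : ℕ) (a : Fin N → ℝ)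
    (A B : ℝ)
    (hAub : ∀ i, a i ≤ A) (hAmem : ∃ i, a i = A)
    (hBlb : ∀ i, B ≤ a i) (hBmem : ∃ i, a i = B)
    (hApos : 0 < A) (hBneg : B < 0)
    (Ψ : ℝ → ℝ) (hΨ : ∀ μ, Ψ μ = ∑ i, a i / (1 + μ * a i)) :
    (∀ μ ∈ Ioo (-1 / A) (-1 / B), ∀ i, 0 < 1 + μ * a i) ∧
    StrictAntiOn Ψ (Ioo (-1 / A) (-1 / B)) ∧
    Tendsto Ψ (𝓝[>] (-1 / A)) atTop ∧
    Tendsto Ψ (𝓝[<] (-1 / B)) atBot ∧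
    (∃! μs : ℝ, μs ∈ Ioo (-1 / A) (-1 / B) ∧ Ψ μs = 0) ∧
    ∀ μs ∈ Ioo (-1 / A) (-1 / B), Ψ μs = 0 →
      ((∀ i : Fin N, 0 ≤ 1 / (N * (1 + μs * a i))) ∧
        (∑ i, 1 / (N * (1 + μs * a i))) = 1 ∧
        (∑ i, 1 / (N * (1 + μs * a i)) * a i) = 0) ∧
      ∀ q : Fin N → ℝ, (∀ i, 0 ≤ q i) → (∑ i, q i) = 1 → (∑ i, q i * a i) = 0 →
        q ≠ (fun i => 1 / (N * (1 + μs * a i))) →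
        (∏ i, q i) < ∏ i : Fin N, 1 / (N * (1 + μs * a i)) := by
  obtain rfl : Ψ = elScore a := funext hΨ
  obtain ⟨iA, hiA⟩ := hAmem
  obtain ⟨iB, hiB⟩ := hBmem
  have hpos : ∀ μ ∈ Ioo (-1 / A) (-1 / B), ∀ i, 0 < 1 + μ * a i := fun μ hμ i =>
    one_add_mul_pos_of_mem_Ioo hApos hBneg hμ (hBlb i) (hAub i)
  have hanti : StrictAntiOn (elScore a) (Ioo (-1 / A) (-1 / B)) :=
    (elScore_strictAntiOn a (i₀ := iA) (hiA ▸ hApos.ne')).mono hpos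
  have htop := elScore_tendsto_atTop a hApos hAub hiA
  have hbot := elScore_tendsto_atBot a hBneg hBlb hiB
  have hlr : -1 / A < -1 / B :=
    (div_neg_of_neg_of_pos (by norm_num) hApos).trans
      (div_pos_of_neg_of_neg (by norm_num) hBneg)
  refine ⟨hpos, hanti, htop, hbot, existsUnique_eq_zero_of_strictAntiOn_Ioo hlr
    ((elScore_continuousOn a).mono hpos) hanti htop hbot, fun μ hμ h0 => ?_⟩
  have : Nonempty (Fin N) := ⟨iA⟩
  have hw : ∀ i, 1 / (N * (1 + μ * a i)) = elWeight a μ i := fun i => by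
    rw [elWeight, Fintype.card_fin]
  simp only [hw]
  exact ⟨⟨fun i => (elWeight_pos a (hpos μ hμ) i).le, sum_elWeight a (hpos μ hμ) h0,
    sum_elWeight_mul a h0⟩, fun _ => prod_lt_prod_elWeight a (hpos μ hμ)⟩

theorem stmt19 (N : ℕ) (hN : 2 ≤ N) (a : Fin N → ℝ)
    (hbd : ∀ i, |a i| ≤ 1)
    (A B : ℝ)
    (hAub : ∀ i, a i ≤ A) (hAmem : ∃ i, a i = A)
    (hBlb : ∀ i, B ≤ a i) (hBmem : ∃ i, a i = B)
    (hApos : 0 < A) (hBneg : B < 0)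
    (Ψ : ℝ → ℝ) (hΨ : ∀ μ, Ψ μ = ∑ i, a i / (1 + μ * a i)) :
    (∀ μ ∈ Ioo (-1 / A) (-1 / B), ∀ i, 0 < 1 + μ * a i) ∧
    StrictAntiOn Ψ (Ioo (-1 / A) (-1 / B)) ∧
    Tendsto Ψ (𝓝[>] (-1 / A)) atTop ∧
    Tendsto Ψ (𝓝[<] (-1 / B)) atBot ∧
    (∃! μs : ℝ, μs ∈ Ioo (-1 / A) (-1 / B) ∧ Ψ μs = 0) ∧
    ∀ μs ∈ Ioo (-1 / A) (-1 / B), Ψ μs = 0 →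
      ((∀ i : Fin N, 0 ≤ 1 / (N * (1 + μs * a i))) ∧
        (∑ i, 1 / (N * (1 + μs * a i))) = 1 ∧
        (∑ i, 1 / (N * (1 + μs * a i)) * a i) = 0) ∧
      ∀ q : Fin N → ℝ, (∀ i, 0 ≤ q i) → (∑ i, q i) = 1 → (∑ i, q i * a i) = 0 →
        q ≠ (fun i => 1 / (N * (1 + μs * a i))) →
        (∏ i, q i) < ∏ i : Fin N, 1 / (N * (1 + μs * a i)) :=
  stmt19_general N a A B hAub hAmem hBlb hBmem hApos hBneg Ψ hΨ
end
end
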